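/- Let T be a plane spanning tree of a finite point set P in convex position and let f ∈ T. Then there exist two points u, v ∈ P that are adjacent on the convex hull of P (i.e., uv is a convex hull edge of P), lie in different connected components of T − f, and such that (T − f) + uv is again a plane spanning tree of P. -/

import Mathlib

open scoped Classical

noncomputable section

/-- A point in the plane. -/
abbrev Point : Type := ℝ × ℝ

/-- An edge: an unordered pair of points. -/
abbrev Edge : Type := Sym2 Point

/-- The closed straight-line segment spanned by an edge. -/
def seg : Edge → Set Point :=
  Sym2.lift ⟨fun u v => segment ℝ u v, fun u v => segment_symm ℝ u v⟩

/-- Two edges cross if they are distinct and their segments intersect in a point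
that is not a common endpoint of the two edges. -/
def Crosses (e f : Edge) : Prop :=
  e ≠ f ∧ ∃ p : Point, p ∈ seg e ∧ p ∈ seg f ∧ ¬(p ∈ e ∧ p ∈ f)

/-- A finite point set is in convex position if no point lies in the convex hull
of the other points. -/
def ConvexPos (P : Finset Point) : Prop :=
  ∀ p ∈ P, p ∉ convexHull ℝ ((P : Set Point) \ {p})

/-- The cross product (signed area) determining on which side of the oriented
line through `p` and `q` the point `r` lies. -/
def crossProd (p q r : Point) : ℝ :=
  (q.1 - p.1) * (r.2 - p.2) - (q.2 - p.2) * (r.1 - p.1)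

/-- `e` is a convex hull edge of `P`: `e = uv` with `u, v ∈ P` distinct and all
other points of `P` strictly on one side of the line through `u` and `v`. -/
def IsHullEdge (P : Finset Point) (e : Edge) : Prop :=
  ∃ u v : Point, e = s(u, v) ∧ u ∈ P ∧ v ∈ P ∧ u ≠ v ∧
    ((∀ w ∈ P, w ≠ u → w ≠ v → 0 < crossProd u v w) ∨
     (∀ w ∈ P, w ≠ u → w ≠ v → crossProd u v w < 0))

/-- A diagonal of `P`: a nondegenerate edge between points of `P` that is not a
convex hull edge. -/
def IsDiagonal (P : Finset Point) (e : Edge) : Prop :=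
  (∀ p ∈ e, p ∈ P) ∧ ¬e.IsDiag ∧ ¬IsHullEdge P e

/-- `T` is a plane (non-crossing) spanning tree of `P`: the endpoints of the
edges lie in `P`, no edge is a loop, there are `|P| - 1` edges, any two points
of `P` are connected by edges of `T`, and the edges are pairwise non-crossing. -/
structure IsPST (P : Finset Point) (T : Finset Edge) : Prop where
  endpoints_mem : ∀ e ∈ T, ∀ p ∈ e, p ∈ P
  not_loop : ∀ e ∈ T, ¬e.IsDiag
  card_eq : T.card + 1 = P.card
  connected : ∀ u ∈ P, ∀ v ∈ P, Relation.ReflTransGen (fun a b => s(a, b) ∈ T) u v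
  noncrossing : ∀ e ∈ T, ∀ f ∈ T, ¬Crosses e f

/-- A flip from `T` to `T'` removing the edge `e` and adding the edge `f`. -/
def IsFlip (P : Finset Point) (T T' : Finset Edge) (e f : Edge) : Prop :=
  IsPST P T ∧ IsPST P T' ∧ e ∈ T ∧ f ∉ T ∧ T' = insert f (T.erase e)

/-- `S 0, S 1, …, S k` is a flip sequence of plane spanning trees of `P`. -/
def IsFlipSeq (P : Finset Point) (k : ℕ) (S : ℕ → Finset Edge) : Prop :=
  (∀ i ≤ k, IsPST P (S i)) ∧ ∀ i < k, ∃ e f : Edge, IsFlip P (S i) (S (i + 1)) e f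

/-- `S 0, …, S k` is a flip sequence from `TI` to `TF`. -/
def IsFlipSeqBtw (P : Finset Point) (TI TF : Finset Edge) (k : ℕ)
    (S : ℕ → Finset Edge) : Prop :=
  IsFlipSeq P k S ∧ S 0 = TI ∧ S k = TF

/-- The flip distance between two plane spanning trees of `P`. -/
def flipDist (P : Finset Point) (TI TF : Finset Edge) : ℕ :=
  sInf {k : ℕ | ∃ S : ℕ → Finset Edge, IsFlipSeqBtw P TI TF k S}

/-- `S 0, …, S k` is a shortest flip sequence from `TI` to `TF`. -/
def IsShortest (P : Finset Point) (TI TF : Finset Edge) (k : ℕ)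
    (S : ℕ → Finset Edge) : Prop :=
  IsFlipSeqBtw P TI TF k S ∧ k = flipDist P TI TF

/-- `Trace S k i e tr`: in the flip sequence `S i, S (i+1), …, S k`, the trace of
the edge `e` is the list `tr`. -/
inductive Trace (S : ℕ → Finset Edge) (k : ℕ) : ℕ → Edge → List Edge → Prop
  | last (e : Edge) : Trace S k k e [e]
  | keep {i : ℕ} {e : Edge} {tr : List Edge} :
      i < k → e ∈ S (i + 1) → Trace S k (i + 1) e tr → Trace S k i e tr
  | move {i : ℕ} {e f : Edge} {tr : List Edge} :
      i < k → e ∉ S (i + 1) → f ∈ S (i + 1) → f ∉ S i →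
      Trace S k (i + 1) f tr → Trace S k i e (e :: tr)

/-- The number of flips of the sequence `S 0, …, S k` in which `e` is the
removed edge. -/
def removedCount (e : Edge) (k : ℕ) (S : ℕ → Finset Edge) : ℕ :=
  ((Finset.range k).filter fun i => e ∈ S i ∧ e ∉ S (i + 1)).card


end

section AuxFlipLemmas

lemma crossProd_swap (u v w : Point) : crossProd v u w = -crossProd u v w := by
  unfold crossProd; ring

lemma crossProd_swap23 (u v w : Point) : crossProd u w v = -crossProd u v w := by
  unfold crossProd; ring

lemma crossProd_left (u v : Point) : crossProd u v u = 0 := by unfold crossProd; ring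

lemma crossProd_right (u v : Point) : crossProd u v v = 0 := by unfold crossProd; ring

lemma exists_param (u v w : Point) (h : crossProd u v w = 0) (huv : u ≠ v) :
    ∃ t : ℝ, w.1 - u.1 = t * (v.1 - u.1) ∧ w.2 - u.2 = t * (v.2 - u.2) := by
  unfold crossProd at h
  by_cases h1 : v.1 = u.1
  · have h2 : v.2 ≠ u.2 := by
      intro h2; exact huv (Prod.ext h1 h2).symm
    refine ⟨(w.2 - u.2) / (v.2 - u.2), ?_, ?_⟩
    · have h' : (v.2 - u.2) * (w.1 - u.1) = 0 := by
        rw [h1] at h; ring_nf at h ⊢; linarith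
      have hw1 : w.1 - u.1 = 0 :=
        (mul_eq_zero.mp h').resolve_left (sub_ne_zero.mpr h2)
      rw [h1, hw1]; ring
    · exact (div_mul_cancel₀ _ (sub_ne_zero.mpr h2)).symm
  · have h1' : v.1 - u.1 ≠ 0 := sub_ne_zero.mpr h1
    refine ⟨(w.1 - u.1) / (v.1 - u.1), (div_mul_cancel₀ _ h1').symm, ?_⟩
    rw [div_mul_eq_mul_div, eq_div_iff h1']
    linear_combination h

lemma collinear_false {P : Finset Point} (hP : ConvexPos P) {u v w : Point}
    (hu : u ∈ P) (hv : v ∈ P) (hw : w ∈ P)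
    (huv : u ≠ v) (huw : u ≠ w) (hvw : v ≠ w) (h : crossProd u v w = 0) : False := by
  obtain ⟨t, h1, h2⟩ := exists_param u v w h huv
  rcases le_or_gt t 0 with ht | ht
  · -- u ∈ segment w v
    apply hP u hu
    have hseg : u ∈ segment ℝ w v := by
      refine ⟨1 / (1 - t), -t / (1 - t),
        le_of_lt (div_pos one_pos (by linarith)),
        div_nonneg (by linarith) (by linarith), ?_, ?_⟩
      · have : (1:ℝ) - t ≠ 0 := by intro hc; linarith
        field_simp
        ring
      · have hne : (1:ℝ) - t ≠ 0 := by intro hc; linarith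
        apply Prod.ext <;>
          simp only [Prod.smul_fst, Prod.smul_snd, Prod.fst_add, Prod.snd_add, smul_eq_mul] <;>
          field_simp <;> nlinarith [h1, h2]
    exact segment_subset_convexHull (by simp [hw, Ne.symm huw]) (by simp [hv, Ne.symm huv]) hseg
  rcases le_or_gt t 1 with ht1 | ht1
  · -- w ∈ segment u v
    apply hP w hw
    have hseg : w ∈ segment ℝ u v := by
      refine ⟨1 - t, t, by linarith, le_of_lt ht, by ring, ?_⟩
      apply Prod.ext <;>
        simp only [Prod.smul_fst, Prod.smul_snd, Prod.fst_add, Prod.snd_add, smul_eq_mul] <;>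
        nlinarith [h1, h2]
    exact segment_subset_convexHull (by simp [hu, huw]) (by simp [hv, hvw]) hseg
  · -- v ∈ segment u w
    apply hP v hv
    have htne : t ≠ 0 := by linarith
    have hseg : v ∈ segment ℝ u w := by
      refine ⟨1 - 1/t, 1/t, ?_, by positivity, by ring, ?_⟩
      · have : 1/t ≤ 1 := by
          rw [div_le_one (by linarith)]; linarith
        linarith
      · apply Prod.ext <;>
          simp only [Prod.smul_fst, Prod.smul_snd, Prod.fst_add, Prod.snd_add, smul_eq_mul] <;>
          field_simp <;> nlinarith [h1, h2]
    exact segment_subset_convexHull (by simp [hu, huv]) (by simp [hw, Ne.symm hvw]) hseg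

def GoodPair (P : Finset Point) (u v : Point) : Prop :=
  u ∈ P ∧ v ∈ P ∧ u ≠ v ∧ ∃ ε : ℝ, (ε = 1 ∨ ε = -1) ∧
    ∀ w ∈ P, w ≠ u → w ≠ v → 0 < ε * crossProd u v w

lemma goodPair_symm {P : Finset Point} {u v : Point} (h : GoodPair P u v) :
    GoodPair P v u := by
  obtain ⟨hu, hv, huv, ε, hε, H⟩ := h
  refine ⟨hv, hu, huv.symm, -ε, ?_, ?_⟩
  · rcases hε with rfl | rfl
    · right; norm_num
    · left; norm_num
  · intro w hw h1 h2
    have := H w hw h2 h1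
    have hsw : crossProd v u w = -crossProd u v w := crossProd_swap u v w
    rw [hsw]
    nlinarith
lemma goodPair_hullEdge {P : Finset Point} {u v : Point} (h : GoodPair P u v) :
    IsHullEdge P s(u, v) := by
  obtain ⟨hu, hv, huv, ε, hε, H⟩ := h
  refine ⟨u, v, rfl, hu, hv, huv, ?_⟩
  rcases hε with rfl | rfl
  · left; intro w hw h1 h2; have := H w hw h1 h2; linarith
  · right; intro w hw h1 h2; have := H w hw h1 h2; linarith

lemma convexPos_mono {P Q : Finset Point} (hP : ConvexPos P) (hQP : Q ⊆ P) :
    ConvexPos Q := by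
  intro p hp hmem
  exact hP p (hQP hp) (convexHull_mono (Set.diff_subset_diff_left (by exact_mod_cast hQP)) hmem)

lemma Lkey {P : Finset Point} (hP : ConvexPos P) {ε : ℝ} (hε : ε ≠ 0)
    {u v p : Point} (hu : u ∈ P) (hv : v ∈ P) (hp : p ∈ P)
    (huv : u ≠ v) (hup : u ≠ p) (hvp : v ≠ p)
    (H : ∀ w ∈ P, w ≠ u → w ≠ v → w ≠ p → 0 < ε * crossProd u v w)
    (Hp : ε * crossProd u v p < 0) :
    ∀ w ∈ P, w ≠ u → w ≠ p → 0 < ε * crossProd u p w := by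
  intro w hw hwu hwp
  by_contra hle
  push_neg at hle
  have hcol : crossProd u p w ≠ 0 := fun h0 =>
    collinear_false hP hu hp hw hup (Ne.symm hwu) (Ne.symm hwp) h0
  have hneg : ε * crossProd u p w < 0 := hle.lt_of_ne (mul_ne_zero hε hcol)
  have hv' : 0 < ε * crossProd u p v := by
    have h23 : crossProd u p v = -crossProd u v p := crossProd_swap23 u v p
    rw [h23]; nlinarith
  have hwv : w ≠ v := by rintro rfl; linarith
  have hw' : 0 < ε * crossProd u v w := H w hw hwu hwv hwp
  have hden : 0 < ε * crossProd u p v - ε * crossProd u p w := by linarith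
  obtain ⟨t, ht0, ht1, hteq⟩ :
      ∃ t : ℝ, 0 < t ∧ t ≤ 1 ∧
        (1 - t) * (ε * crossProd u p v) + t * (ε * crossProd u p w) = 0 := by
    refine ⟨(ε * crossProd u p v) / (ε * crossProd u p v - ε * crossProd u p w),
      div_pos hv' hden, by rw [div_le_one hden]; linarith, ?_⟩
    rw [show ∀ t : ℝ, (1 - t) * (ε * crossProd u p v) + t * (ε * crossProd u p w) =
        ε * crossProd u p v - t * (ε * crossProd u p v - ε * crossProd u p w) from
        fun t => by ring, div_mul_cancel₀ _ hden.ne', sub_self]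
  set x : Point := ((1-t)*v.1 + t*w.1, (1-t)*v.2 + t*w.2) with hxdef
  have hxc1 : x.1 = (1-t)*v.1 + t*w.1 := by rw [hxdef]
  have hxc2 : x.2 = (1-t)*v.2 + t*w.2 := by rw [hxdef]
  clear_value x
  have hx_up : crossProd u p x = 0 := by
    have expand : crossProd u p x = (1-t) * crossProd u p v + t * crossProd u p w := by
      simp only [crossProd, hxc1, hxc2]; ring
    have h0 : ε * crossProd u p x = 0 := by rw [expand]; nlinarith [hteq]
    rcases mul_eq_zero.mp h0 with h | h
    · exact absurd h hε
    · exact h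
  obtain ⟨s, hs1, hs2⟩ := exists_param u p x hx_up hup
  have e1 : crossProd u v x = t * crossProd u v w := by
    simp only [crossProd, hxc1, hxc2]; ring
  have e3 : crossProd u v x = s * crossProd u v p := by
    have hx1 : x.1 = u.1 + s*(p.1-u.1) := by linarith [hs1]
    have hx2 : x.2 = u.2 + s*(p.2-u.2) := by linarith [hs2]
    simp only [crossProd, hx1, hx2]; ring
  have hpos : 0 < ε * crossProd u v x := by
    have h : ε * crossProd u v x = t * (ε * crossProd u v w) := by rw [e1]; ring
    rw [h]; exact mul_pos ht0 hw'
  have hs_neg : s < 0 := by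
    have h : ε * crossProd u v x = s * (ε * crossProd u v p) := by rw [e3]; ring
    by_contra hge
    push_neg at hge
    have : s * (ε * crossProd u v p) ≤ 0 :=
      mul_nonpos_of_nonneg_of_nonpos hge (le_of_lt Hp)
    linarith
  -- contradiction with convex position of u
  apply hP u hu
  have hxseg : x ∈ segment ℝ v w := by
    refine ⟨1-t, t, by linarith, le_of_lt ht0, by ring, ?_⟩
    apply Prod.ext <;>
      simp only [Prod.smul_fst, Prod.smul_snd, Prod.fst_add, Prod.snd_add, smul_eq_mul,
        hxc1, hxc2]
  have hu_seg : u ∈ segment ℝ x p := by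
    have hsne : (1:ℝ) - s ≠ 0 := by intro hc; linarith
    have hx1 : x.1 = u.1 + s*(p.1-u.1) := by linarith [hs1]
    have hx2 : x.2 = u.2 + s*(p.2-u.2) := by linarith [hs2]
    refine ⟨1/(1-s), -s/(1-s), le_of_lt (div_pos one_pos (by linarith)),
      div_nonneg (by linarith) (by linarith), by field_simp; ring, ?_⟩
    apply Prod.ext <;>
      simp only [Prod.smul_fst, Prod.smul_snd, Prod.fst_add, Prod.snd_add, smul_eq_mul,
        hx1, hx2] <;> field_simp <;> ring
  have h1 : x ∈ convexHull ℝ ({v, w, p} : Set Point) :=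
    segment_subset_convexHull (by simp) (by simp) hxseg
  have h2 : p ∈ convexHull ℝ ({v, w, p} : Set Point) :=
    subset_convexHull _ _ (by simp)
  have h3 : u ∈ convexHull ℝ ({v, w, p} : Set Point) :=
    (convex_convexHull ℝ _).segment_subset h1 h2 hu_seg
  refine convexHull_mono ?_ h3
  intro z hz
  simp only [Set.mem_insert_iff, Set.mem_singleton_iff] at hz
  rcases hz with rfl | rfl | rfl
  · exact ⟨hv, Ne.symm huv⟩
  · exact ⟨hw, hwu⟩
  · exact ⟨hp, Ne.symm hup⟩

lemma exists_bichrom : ∀ (n : ℕ) (P : Finset Point), P.card = n → ConvexPos P →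
    ∀ A : Finset Point, A ⊆ P → A.Nonempty → (P \ A).Nonempty →
    ∃ u v, u ∈ A ∧ v ∈ P ∧ v ∉ A ∧ GoodPair P u v := by
  intro n
  induction n with
  | zero =>
    intro P hc _ A hAP ⟨a, ha⟩ _
    rw [Finset.card_eq_zero] at hc
    exact absurd (hAP ha) (by simp [hc])
  | succ n ih =>
    rintro P hcard hP A hAP ⟨a, ha⟩ ⟨b, hb⟩
    have hbP : b ∈ P := (Finset.mem_sdiff.mp hb).1
    have hbA : b ∉ A := (Finset.mem_sdiff.mp hb).2
    have haP : a ∈ P := hAP ha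
    have hab : a ≠ b := fun h => hbA (h ▸ ha)
    by_cases hsmall : P.card ≤ 2
    · -- P = {a, b}
      have hsub : P ⊆ {a, b} := by
        have h2 : ({a, b} : Finset Point) ⊆ P := by
          intro z hz; rcases Finset.mem_insert.mp hz with rfl | hz
          · exact haP
          · rw [Finset.mem_singleton] at hz; subst hz; exact hbP
        have hcard2 : ({a, b} : Finset Point).card = 2 := Finset.card_pair hab
        rw [Finset.eq_of_subset_of_card_le h2 (by omega)]
      refine ⟨a, b, ha, hbP, hbA, haP, hbP, hab, 1, Or.inl rfl, ?_⟩
      intro w hw h1 h2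
      rcases Finset.mem_insert.mp (hsub hw) with rfl | hw'
      · exact absurd rfl h1
      · rw [Finset.mem_singleton] at hw'; exact absurd hw' h2
    · push_neg at hsmall
      obtain ⟨p, hpP, hA'ne, hB'ne⟩ : ∃ p ∈ P, (A.erase p).Nonempty ∧
          ((P.erase p) \ (A.erase p)).Nonempty := by
        by_cases h2A : 1 < A.card
        · obtain ⟨a1, ha1, a2, ha2, h12⟩ := Finset.one_lt_card.mp h2A
          refine ⟨a1, hAP ha1, ⟨a2, Finset.mem_erase.mpr ⟨h12.symm, ha2⟩⟩, ⟨b, ?_⟩⟩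
          rw [Finset.mem_sdiff, Finset.mem_erase]
          exact ⟨⟨fun h => hbA (h ▸ ha1), hbP⟩, fun h => hbA (Finset.mem_of_mem_erase h)⟩
        · have hA1 : A.card = 1 := by
            have : 1 ≤ A.card := Finset.card_pos.mpr ⟨a, ha⟩
            omega
          have hBcard : 1 < (P \ A).card := by
            rw [Finset.card_sdiff_of_subset hAP, hA1]; omega
          obtain ⟨b1, hb1, b2, hb2, h12⟩ := Finset.one_lt_card.mp hBcard
          have hb1P : b1 ∈ P := (Finset.mem_sdiff.mp hb1).1
          have hb1A : b1 ∉ A := (Finset.mem_sdiff.mp hb1).2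
          have hb2P : b2 ∈ P := (Finset.mem_sdiff.mp hb2).1
          have hb2A : b2 ∉ A := (Finset.mem_sdiff.mp hb2).2
          refine ⟨b1, hb1P, ⟨a, Finset.mem_erase.mpr ⟨fun h => hb1A (h ▸ ha), ha⟩⟩, ⟨b2, ?_⟩⟩
          rw [Finset.mem_sdiff, Finset.mem_erase]
          exact ⟨⟨h12.symm, hb2P⟩, fun h => hb2A (Finset.mem_of_mem_erase h)⟩
      have hP'card : (P.erase p).card = n := by
        rw [Finset.card_erase_of_mem hpP, hcard]; rfl
      have hP' : ConvexPos (P.erase p) := convexPos_mono hP (Finset.erase_subset _ _)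
      have hA'sub : A.erase p ⊆ P.erase p := by
        intro x hx
        obtain ⟨hxp, hxA⟩ := Finset.mem_erase.mp hx
        exact Finset.mem_erase.mpr ⟨hxp, hAP hxA⟩
      obtain ⟨u, v, huA', hvP', hvA', hgp⟩ :=
        ih (P.erase p) hP'card hP' (A.erase p) hA'sub hA'ne hB'ne
      obtain ⟨huP', hvP'2, huv, ε, hε, Hside⟩ := hgp
      have hup : u ≠ p := (Finset.mem_erase.mp huP').1
      have huP : u ∈ P := (Finset.mem_erase.mp huP').2
      have hvp : v ≠ p := (Finset.mem_erase.mp hvP').1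
      have hvP : v ∈ P := (Finset.mem_erase.mp hvP').2
      have huA : u ∈ A := (Finset.mem_erase.mp huA').2
      have hvA : v ∉ A := fun h => hvA' (Finset.mem_erase.mpr ⟨hvp, h⟩)
      have hcolp : crossProd u v p ≠ 0 := fun h =>
        collinear_false hP huP hvP hpP huv hup hvp h
      have hεne : ε ≠ 0 := by rcases hε with rfl | rfl <;> norm_num
      have Hside' : ∀ w ∈ P, w ≠ u → w ≠ v → w ≠ p → 0 < ε * crossProd u v w :=
        fun w hw h1 h2 h3 => Hside w (Finset.mem_erase.mpr ⟨h3, hw⟩) h1 h2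
      rcases lt_or_gt_of_ne (mul_ne_zero hεne hcolp) with hneg | hpos
      · -- p on the other side; use Lkey
        have Hup := Lkey hP hεne huP hvP hpP huv hup hvp Hside' hneg
        have Hside'' : ∀ w ∈ P, w ≠ v → w ≠ u → w ≠ p → 0 < (-ε) * crossProd v u w := by
          intro w hw h1 h2 h3
          have h := Hside' w hw h2 h1 h3
          have hsw : crossProd v u w = -crossProd u v w := crossProd_swap u v w
          rw [hsw]; nlinarith
        have hnegvu : (-ε) * crossProd v u p < 0 := by
          have hsw : crossProd v u p = -crossProd u v p := crossProd_swap u v p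
          rw [hsw]; nlinarith
        have Hvp := Lkey hP (neg_ne_zero.mpr hεne) hvP huP hpP huv.symm hvp hup
          Hside'' hnegvu
        by_cases hpA : p ∈ A
        · refine ⟨p, v, hpA, hvP, hvA, goodPair_symm ⟨hvP, hpP, hvp, -ε, ?_, Hvp⟩⟩
          rcases hε with rfl | rfl
          · right; norm_num
          · left; norm_num
        · exact ⟨u, p, huA, hpP, hpA, huP, hpP, hup, ε, hε, Hup⟩
      · -- p on the same side
        refine ⟨u, v, huA, hvP, hvA, huP, hvP, huv, ε, hε, ?_⟩
        intro w hw h1 h2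
        by_cases hwp : w = p
        · subst hwp; exact hpos
        · exact Hside' w hw h1 h2 hwp

lemma seg_mk (a b : Point) : seg s(a, b) = segment ℝ a b := rfl

lemma crosses_symm {e f : Edge} (h : Crosses e f) : Crosses f e := by
  obtain ⟨hne, x, h1, h2, h3⟩ := h
  exact ⟨hne.symm, x, h2, h1, fun ⟨a, b⟩ => h3 ⟨b, a⟩⟩

lemma nocross {P : Finset Point} (hP : ConvexPos P) {u v : Point}
    (hgp : GoodPair P u v) {p q : Point} (hp : p ∈ P) (hq : q ∈ P) (hpq : p ≠ q) :
    ¬ Crosses s(p, q) s(u, v) := by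
  obtain ⟨hu, hv, huv, ε, hε, H⟩ := hgp
  have hεne : ε ≠ 0 := by rcases hε with rfl | rfl <;> norm_num
  rintro ⟨hne, x, hx1, hx2, hx3⟩
  rw [seg_mk] at hx1 hx2
  obtain ⟨α, β, hα, hβ, hαβ, hx⟩ := hx1
  obtain ⟨γ, δ, hγ, hδ, hγδ, hx'⟩ := hx2
  have hxc1 : x.1 = α * p.1 + β * q.1 := by
    rw [← hx]; simp [Prod.smul_fst, smul_eq_mul]
  have hxc2 : x.2 = α * p.2 + β * q.2 := by
    rw [← hx]; simp [Prod.smul_snd, smul_eq_mul]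
  have hxd1 : x.1 = γ * u.1 + δ * v.1 := by
    rw [← hx']; simp [Prod.smul_fst, smul_eq_mul]
  have hxd2 : x.2 = γ * u.2 + δ * v.2 := by
    rw [← hx']; simp [Prod.smul_snd, smul_eq_mul]
  have hγ1 : γ = 1 - δ := by linarith
  have hx0 : crossProd u v x = 0 := by
    simp only [crossProd, hxd1, hxd2, hγ1]; ring
  have hα1 : α = 1 - β := by linarith
  have hexp : crossProd u v x = α * crossProd u v p + β * crossProd u v q := by
    simp only [crossProd, hxc1, hxc2, hα1]; ring
  have hsum : α * (ε * crossProd u v p) + β * (ε * crossProd u v q) = 0 := by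
    have h := hx0
    rw [hexp] at h
    linear_combination ε * h
  have hcp : 0 ≤ ε * crossProd u v p := by
    by_cases h1 : p = u
    · subst h1; rw [crossProd_left]; simp
    by_cases h2 : p = v
    · subst h2; rw [crossProd_right]; simp
    · exact le_of_lt (H p hp h1 h2)
  have hcq : 0 ≤ ε * crossProd u v q := by
    by_cases h1 : q = u
    · subst h1; rw [crossProd_left]; simp
    by_cases h2 : q = v
    · subst h2; rw [crossProd_right]; simp
    · exact le_of_lt (H q hq h1 h2)
  have t1 : 0 ≤ α * (ε * crossProd u v p) := mul_nonneg hα hcp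
  have t2 : 0 ≤ β * (ε * crossProd u v q) := mul_nonneg hβ hcq
  have z1 : α * (ε * crossProd u v p) = 0 := by linarith
  have z2 : β * (ε * crossProd u v q) = 0 := by linarith
  by_cases hcp0 : ε * crossProd u v p = 0
  · have hpuv : p = u ∨ p = v := by
      by_contra hc
      push_neg at hc
      exact absurd hcp0 (ne_of_gt (H p hp hc.1 hc.2))
    by_cases hcq0 : ε * crossProd u v q = 0
    · have hquv : q = u ∨ q = v := by
        by_contra hc
        push_neg at hc
        exact absurd hcq0 (ne_of_gt (H q hq hc.1 hc.2))
      apply hne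
      rcases hpuv with rfl | rfl <;> rcases hquv with rfl | rfl
      · exact absurd rfl hpq
      · rfl
      · exact Sym2.eq_swap
      · exact absurd rfl hpq
    · have hβ0 : β = 0 :=
        (mul_eq_zero.mp z2).resolve_right hcq0
      have hxp : x = p := by
        apply Prod.ext
        · rw [hxc1, hα1, hβ0]; ring
        · rw [hxc2, hα1, hβ0]; ring
      refine hx3 ⟨?_, ?_⟩
      · rw [hxp]; exact Sym2.mem_mk_left _ _
      · rw [hxp]
        rcases hpuv with rfl | rfl
        · exact Sym2.mem_mk_left _ _
        · exact Sym2.mem_mk_right _ _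
  · have hα0 : α = 0 := (mul_eq_zero.mp z1).resolve_right hcp0
    have hβ1 : β = 1 := by linarith
    have hxq : x = q := by
      apply Prod.ext
      · rw [hxc1, hα0, hβ1]; ring
      · rw [hxc2, hα0, hβ1]; ring
    have hcq0 : ε * crossProd u v q = 0 := by
      rw [hβ1] at z2; linarith
    have hquv : q = u ∨ q = v := by
      by_contra hc
      push_neg at hc
      exact absurd hcq0 (ne_of_gt (H q hq hc.1 hc.2))
    refine hx3 ⟨?_, ?_⟩
    · rw [hxq]; exact Sym2.mem_mk_right _ _
    · rw [hxq]
      rcases hquv with rfl | rfl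
      · exact Sym2.mem_mk_left _ _
      · exact Sym2.mem_mk_right _ _

lemma exists_ne_edge {E : Finset Edge} {r v : Point}
    (h : Relation.ReflTransGen (fun x y => s(x, y) ∈ E) r v) :
    r = v ∨ ∃ x y, x ≠ y ∧ s(x, y) ∈ E := by
  induction h with
  | refl => exact Or.inl rfl
  | @tail b c hrb hbc ih =>
    by_cases hbc' : b = c
    · subst hbc'; exact ih
    · exact Or.inr ⟨b, c, hbc', hbc⟩

lemma conn_card : ∀ (m : ℕ) (E : Finset Edge), E.card = m → ∀ (V : Finset Point) (r : Point),
    (∀ v ∈ V, Relation.ReflTransGen (fun x y => s(x, y) ∈ E) r v) →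
    V.card ≤ E.card + 1 := by
  intro m
  induction m using Nat.strong_induction_on with
  | _ m ih =>
    intro E hEcard V r hconn
    by_cases hV : ∀ v ∈ V, v = r
    · calc V.card ≤ ({r} : Finset Point).card := Finset.card_le_card (fun v hv => by
          simp [hV v hv])
      _ ≤ E.card + 1 := by simp
    · push_neg at hV
      obtain ⟨v0, hv0, hv0r⟩ := hV
      obtain ⟨x, y, hxy, he⟩ :=
        (exists_ne_edge (hconn v0 hv0)).resolve_left (fun h => hv0r h.symm)
      set σ : Point → Point := fun z => if z = y then x else z with hσ
      set E' := (E.erase s(x, y)).image (Sym2.map σ) with hE'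
      have hE1 : 1 ≤ E.card := Finset.card_pos.mpr ⟨_, he⟩
      have hE'le : E'.card ≤ E.card - 1 := by
        calc E'.card ≤ (E.erase s(x, y)).card := Finset.card_image_le
        _ = E.card - 1 := Finset.card_erase_of_mem he
      have hE'lt : E'.card < m := by omega
      have hmap : ∀ a b, s(a, b) ∈ E →
          Relation.ReflTransGen (fun z w => s(z, w) ∈ E') (σ a) (σ b) := by
        intro a b hab
        by_cases h1 : s(a, b) = s(x, y)
        · have hσab : σ a = σ b := by
            rcases Sym2.eq_iff.mp h1 with ⟨rfl, rfl⟩ | ⟨rfl, rfl⟩ <;>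
              simp [hσ, if_neg hxy]
          rw [hσab]
        · refine Relation.ReflTransGen.single ?_
          rw [show s(σ a, σ b) = Sym2.map σ s(a, b) from (Sym2.map_pair_eq σ a b).symm]
          exact Finset.mem_image_of_mem _ (Finset.mem_erase.mpr ⟨h1, hab⟩)
      have hlift : ∀ v, Relation.ReflTransGen (fun z w => s(z, w) ∈ E) r v →
          Relation.ReflTransGen (fun z w => s(z, w) ∈ E') (σ r) (σ v) := by
        intro v h
        induction h with
        | refl => exact Relation.ReflTransGen.refl
        | @tail b c hrb hbc ih2 => exact ih2.trans (hmap b c hbc)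
      have ih' := ih E'.card hE'lt E' rfl (V.image σ) (σ r) (by
        rintro w hw
        obtain ⟨v, hv, rfl⟩ := Finset.mem_image.mp hw
        exact hlift v (hconn v hv))
      have h1 : V.erase y ⊆ V.image σ := by
        intro z hz
        obtain ⟨hzy, hzV⟩ := Finset.mem_erase.mp hz
        exact Finset.mem_image.mpr ⟨z, hzV, if_neg hzy⟩
      have h2 : V.card ≤ (V.erase y).card + 1 := by
        have hsub : V ⊆ insert y (V.erase y) := by
          intro z hz
          by_cases hzy : z = y
          · subst hzy; exact Finset.mem_insert_self _ _
          · exact Finset.mem_insert_of_mem (Finset.mem_erase.mpr ⟨hzy, hz⟩)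
        calc V.card ≤ (insert y (V.erase y)).card := Finset.card_le_card hsub
        _ ≤ (V.erase y).card + 1 := Finset.card_insert_le _ _
      have h3 : (V.erase y).card ≤ (V.image σ).card := Finset.card_le_card h1
      omega


end AuxFlipLemmas

/-- Removing an edge `f` from a plane spanning tree `T`, there is a convex hull
edge `uv` joining the two components of `T - f` such that `T - f + uv` is again
a plane spanning tree. -/
theorem stmt_16 (P : Finset Point) (hP : ConvexPos P) (T : Finset Edge)
    (hT : IsPST P T) (f : Edge) (hf : f ∈ T) :
    ∃ u v : Point, u ∈ P ∧ v ∈ P ∧ IsHullEdge P s(u, v) ∧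
      ¬Relation.ReflTransGen (fun a b => s(a, b) ∈ T.erase f) u v ∧
      IsPST P (insert s(u, v) (T.erase f)) := by
  obtain ⟨a, b, hfab⟩ : ∃ a b, f = s(a, b) :=
    Sym2.inductionOn f (fun x y => ⟨x, y, rfl⟩)
  have haP : a ∈ P := hT.endpoints_mem f hf a (by rw [hfab]; exact Sym2.mem_mk_left _ _)
  have hbP : b ∈ P := hT.endpoints_mem f hf b (by rw [hfab]; exact Sym2.mem_mk_right _ _)
  have hab : a ≠ b := by
    intro h
    exact hT.not_loop f hf (by rw [hfab, h]; exact Sym2.mk_isDiag_iff.mpr rfl)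
  -- the two components of T - f
  have hpart : ∀ p, Relation.ReflTransGen (fun x y => s(x, y) ∈ T) a p →
      Relation.ReflTransGen (fun x y => s(x, y) ∈ T.erase f) a p ∨
      Relation.ReflTransGen (fun x y => s(x, y) ∈ T.erase f) b p := by
    intro p h
    induction h with
    | refl => exact Or.inl Relation.ReflTransGen.refl
    | @tail c d hac hcd ih =>
      by_cases hcf : s(c, d) = f
      · rw [hfab] at hcf
        rcases Sym2.eq_iff.mp hcf with ⟨rfl, rfl⟩ | ⟨rfl, rfl⟩
        · exact Or.inr Relation.ReflTransGen.refl
        · exact Or.inl Relation.ReflTransGen.refl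
      · have hR' : s(c, d) ∈ T.erase f := Finset.mem_erase.mpr ⟨hcf, hcd⟩
        rcases ih with h | h
        · exact Or.inl (h.tail hR')
        · exact Or.inr (h.tail hR')
  have hsym' : Symmetric (fun x y => s(x, y) ∈ T.erase f) := by
    intro x y h
    show s(y, x) ∈ T.erase f
    rw [Sym2.eq_swap]
    exact h
  have hnab : ¬ Relation.ReflTransGen (fun x y => s(x, y) ∈ T.erase f) a b := by
    intro hconn'
    have hall : ∀ v ∈ P, Relation.ReflTransGen (fun x y => s(x, y) ∈ T.erase f) a v := by
      intro v hv
      rcases hpart v (hT.connected a haP v hv) with h | h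
      · exact h
      · exact hconn'.trans h
    have hle := conn_card (T.erase f).card (T.erase f) rfl P a hall
    rw [Finset.card_erase_of_mem hf] at hle
    have hc := hT.card_eq
    have h1 : 1 ≤ T.card := Finset.card_pos.mpr ⟨f, hf⟩
    omega
  set A := P.filter (fun x => Relation.ReflTransGen (fun z w => s(z, w) ∈ T.erase f) a x)
    with hA
  obtain ⟨u, v, huA, hvP, hvA, hgp⟩ := exists_bichrom P.card P rfl hP A
    (Finset.filter_subset _ _)
    ⟨a, Finset.mem_filter.mpr ⟨haP, Relation.ReflTransGen.refl⟩⟩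
    ⟨b, Finset.mem_sdiff.mpr ⟨hbP, fun h => hnab (Finset.mem_filter.mp h).2⟩⟩
  have huP : u ∈ P := hgp.1
  have huv : u ≠ v := hgp.2.2.1
  have hau : Relation.ReflTransGen (fun z w => s(z, w) ∈ T.erase f) a u :=
    (Finset.mem_filter.mp huA).2
  have hnuv : ¬ Relation.ReflTransGen (fun z w => s(z, w) ∈ T.erase f) u v :=
    fun h => hvA (Finset.mem_filter.mpr ⟨hvP, hau.trans h⟩)
  have hbv : Relation.ReflTransGen (fun z w => s(z, w) ∈ T.erase f) b v :=
    (hpart v (hT.connected a haP v hvP)).resolve_left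
      (fun h => hvA (Finset.mem_filter.mpr ⟨hvP, h⟩))
  have hnew : s(u, v) ∉ T.erase f := fun h => hnuv (Relation.ReflTransGen.single h)
  refine ⟨u, v, huP, hvP, goodPair_hullEdge hgp, hnuv, ?_⟩
  constructor
  · -- endpoints_mem
    intro e he p hpe
    rcases Finset.mem_insert.mp he with rfl | he'
    · rcases Sym2.mem_iff.mp hpe with rfl | rfl
      · exact huP
      · exact hvP
    · exact hT.endpoints_mem e (Finset.mem_of_mem_erase he') p hpe
  · -- not_loop
    intro e he
    rcases Finset.mem_insert.mp he with rfl | he'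
    · rw [Sym2.mk_isDiag_iff]; exact huv
    · exact hT.not_loop e (Finset.mem_of_mem_erase he')
  · -- card
    rw [Finset.card_insert_of_notMem hnew, Finset.card_erase_of_mem hf]
    have hc := hT.card_eq
    have h1 : 1 ≤ T.card := Finset.card_pos.mpr ⟨f, hf⟩
    omega
  · -- connected
    have hmono : ∀ {x y : Point},
        Relation.ReflTransGen (fun z w => s(z, w) ∈ T.erase f) x y →
        Relation.ReflTransGen (fun z w => s(z, w) ∈ insert s(u, v) (T.erase f)) x y :=
      fun h => Relation.ReflTransGen.mono (fun x y hh => Finset.mem_insert_of_mem hh) _ _ h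
    have hsym'' : Symmetric (fun x y => s(x, y) ∈ insert s(u, v) (T.erase f)) := by
      intro x y h
      show s(y, x) ∈ _
      rw [Sym2.eq_swap (a := y) (b := x)]
      exact h
    have hRsymm : Symmetric (Relation.ReflTransGen
        (fun x y => s(x, y) ∈ insert s(u, v) (T.erase f))) := by
      haveI : Std.Symm (fun x y => s(x, y) ∈ insert s(u, v) (T.erase f)) :=
        ⟨fun a b h => hsym'' h⟩
      exact fun a b h => Relation.ReflTransGen.symmetric.symm a b h
    have hvu : Relation.ReflTransGen
        (fun z w => s(z, w) ∈ insert s(u, v) (T.erase f)) v u := by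
      refine Relation.ReflTransGen.single ?_
      show s(v, u) ∈ _
      rw [Sym2.eq_swap (a := v) (b := u)]
      exact Finset.mem_insert_self _ _
    have hxu : ∀ x ∈ P, Relation.ReflTransGen
        (fun z w => s(z, w) ∈ insert s(u, v) (T.erase f)) x u := by
      intro x hx
      rcases hpart x (hT.connected a haP x hx) with h | h
      · exact (hRsymm (hmono h)).trans (hmono hau)
      · exact (hRsymm (hmono h)).trans ((hmono hbv).trans hvu)
    intro x hx y hy
    exact (hxu x hx).trans (hRsymm (hxu y hy))
  · -- noncrossing
    intro e he e2 he2
    rcases Finset.mem_insert.mp he with rfl | he' <;>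
      rcases Finset.mem_insert.mp he2 with he2eq | he2'
    · rw [he2eq]; rintro ⟨hne, -⟩; exact hne rfl
    · obtain ⟨p, q, rfl⟩ : ∃ p q, e2 = s(p, q) :=
        Sym2.inductionOn e2 (fun x y => ⟨x, y, rfl⟩)
      have hpP : p ∈ P := hT.endpoints_mem _ (Finset.mem_of_mem_erase he2') p
        (Sym2.mem_mk_left _ _)
      have hqP : q ∈ P := hT.endpoints_mem _ (Finset.mem_of_mem_erase he2') q
        (Sym2.mem_mk_right _ _)
      have hpq : p ≠ q := by
        intro h
        exact hT.not_loop _ (Finset.mem_of_mem_erase he2') (Sym2.mk_isDiag_iff.mpr h)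
      intro h
      exact nocross hP hgp hpP hqP hpq (crosses_symm h)
    · obtain ⟨p, q, rfl⟩ : ∃ p q, e = s(p, q) :=
        Sym2.inductionOn e (fun x y => ⟨x, y, rfl⟩)
      have hpP : p ∈ P := hT.endpoints_mem _ (Finset.mem_of_mem_erase he') p
        (Sym2.mem_mk_left _ _)
      have hqP : q ∈ P := hT.endpoints_mem _ (Finset.mem_of_mem_erase he') q
        (Sym2.mem_mk_right _ _)
      have hpq : p ≠ q := by
        intro h
        exact hT.not_loop _ (Finset.mem_of_mem_erase he') (Sym2.mk_isDiag_iff.mpr h)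
      rw [he2eq]
      exact nocross hP hgp hpP hqP hpq
    · exact hT.noncrossing e (Finset.mem_of_mem_erase he') e2 (Finset.mem_of_mem_erase he2')
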